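/- Let L' and L be layers in a layered sequent G and let S be a layer simulation between L' and L. Then for every label x ∈ L there exists a label x' ∈ L' such that x' S x. -/

import Mathlib

/-- Formulas of intuitionistic modal logic, built from atomic propositions
`a ∈ ℕ` by `A ::= ⊥ | a | (A∧A) | (A∨A) | (A⊃A) | □A | ◇A`. -/
inductive Formula : Type
  | bot  : Formula
  | atom : ℕ → Formula
  | and  : Formula → Formula → Formula
  | or   : Formula → Formula → Formula
  | imp  : Formula → Formula → Formula
  | box  : Formula → Formula
  | dia  : Formula → Formula
  deriving DecidableEq
/-- A labelled sequent `G = (R, Γ ⟹ Δ)`: relational atoms `x ≤ y` (`le`) and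
`x R y` (`rel`) over labels (natural numbers) together with the labelled formulas
occurring on the left (`Γ`) and on the right (`Δ`) of the sequent arrow. -/
structure LSeq : Type where
  le : Set (ℕ × ℕ)
  rel : Set (ℕ × ℕ)
  left : Set (ℕ × Formula)
  right : Set (ℕ × Formula)
namespace LSeq

/-- `x ≤_G y`. -/
def Le (G : LSeq) (x y : ℕ) : Prop := (x, y) ∈ G.le
/-- `x R_G y`. -/
def Rel (G : LSeq) (x y : ℕ) : Prop := (x, y) ∈ G.rel
/-- `x:A•`, i.e. `x:A` occurs on the left of `G`. -/
def Black (G : LSeq) (x : ℕ) (A : Formula) : Prop := (x, A) ∈ G.left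
/-- `x:A∘`, i.e. `x:A` occurs on the right of `G`. -/
def White (G : LSeq) (x : ℕ) (A : Formula) : Prop := (x, A) ∈ G.right

/-- The set of labels occurring in `G`. -/
def labels (G : LSeq) : Set ℕ :=
  {x | (∃ y, G.Le x y ∨ G.Le y x ∨ G.Rel x y ∨ G.Rel y x) ∨ ∃ A, G.Black x A ∨ G.White x A}

/-- `G` is a finite labelled sequent. -/
def FiniteSeq (G : LSeq) : Prop :=
  G.le.Finite ∧ G.rel.Finite ∧ G.left.Finite ∧ G.right.Finite

/-- Add labelled formulas to the left of a sequent. -/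
def addLeft (G : LSeq) (s : Set (ℕ × Formula)) : LSeq := { G with left := G.left ∪ s }
/-- Add labelled formulas to the right of a sequent. -/
def addRight (G : LSeq) (s : Set (ℕ × Formula)) : LSeq := { G with right := G.right ∪ s }

/-- Happiness for a left (`•`) occurrence of a formula at label `x` in `G` (Def. 5.3). -/
def BlackHappy (G : LSeq) (x : ℕ) : Formula → Prop
  | Formula.bot => False
  | Formula.atom _ => True
  | Formula.and A B => G.Black x A ∧ G.Black x B
  | Formula.or A B => G.Black x A ∨ G.Black x B
  | Formula.imp A B => G.White x A ∨ G.Black x B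
  | Formula.box A => ∀ z, G.Rel x z → G.Black z A ∧ G.Black z (Formula.box A)
  | Formula.dia A => ∃ y, G.Rel x y ∧ G.Black y A

/-- Happiness for a right (`∘`) occurrence of a formula at label `x` in `G` (Def. 5.3). -/
def WhiteHappy (G : LSeq) (x : ℕ) : Formula → Prop
  | Formula.bot => True
  | Formula.atom a => ¬ G.Black x (Formula.atom a)
  | Formula.and A B => G.White x A ∨ G.White x B
  | Formula.or A B => G.White x A ∧ G.White x B
  | Formula.imp A B => ∃ y, G.Le x y ∧ G.Black y A ∧ G.White y B
  | Formula.box A => ∃ y z, G.Le x y ∧ G.Rel y z ∧ G.White z A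
  | Formula.dia A => ∀ y, G.Rel x y → G.White y A ∧ G.White y (Formula.dia A)

/-- A label is happy iff all formulas occurring at it are happy. -/
def HappyLabel (G : LSeq) (x : ℕ) : Prop :=
  (∀ A, G.Black x A → G.BlackHappy x A) ∧ (∀ A, G.White x A → G.WhiteHappy x A)

/-- The left exceptions for almost happy labels: formulas of the shape `⊥•`. -/
def AlmostExceptB : Formula → Prop
  | Formula.bot => True
  | _ => False

/-- The left exceptions for naively happy labels: shapes `⊥•` and `(◇A)•`. -/
def NaiveExceptB : Formula → Prop
  | Formula.bot => True
  | Formula.dia _ => True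
  | _ => False

/-- The right exceptions for almost/naively happy labels:
shapes `a∘`, `(A⊃B)∘` and `(□A)∘`. -/
def ExceptW : Formula → Prop
  | Formula.atom _ => True
  | Formula.imp _ _ => True
  | Formula.box _ => True
  | _ => False

/-- A label is almost happy iff all formulas occurring at it are happy,
except possibly those of the shapes `⊥•`, `a∘`, `(A⊃B)∘`, `(□A)∘`. -/
def AlmostHappyLabel (G : LSeq) (x : ℕ) : Prop :=
  (∀ A, G.Black x A → ¬ AlmostExceptB A → G.BlackHappy x A) ∧
  (∀ A, G.White x A → ¬ ExceptW A → G.WhiteHappy x A)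

/-- A label is naively happy iff all formulas occurring at it are happy,
except possibly those of the shapes `⊥•`, `(◇A)•`, `a∘`, `(A⊃B)∘`, `(□A)∘`. -/
def NaivelyHappyLabel (G : LSeq) (x : ℕ) : Prop :=
  (∀ A, G.Black x A → ¬ NaiveExceptB A → G.BlackHappy x A) ∧
  (∀ A, G.White x A → ¬ ExceptW A → G.WhiteHappy x A)

/-- `G` is structurally saturated (Def. 5.5): closure under monotonicity (monL),
the frame conditions (F1) and (F2), and transitivity and reflexivity (on the
labels of `G`) of both `≤_G` and `R_G`. -/
def StructSat (G : LSeq) : Prop :=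
  (∀ x y A, G.Le x y → G.Black x A → G.Black y A) ∧
  (∀ x y z, G.Rel x y → G.Le y z → ∃ u, G.Le x u ∧ G.Rel u z) ∧
  (∀ x y z, G.Rel x y → G.Le x z → ∃ u, G.Le y u ∧ G.Rel z u) ∧
  (∀ x y z, G.Le x y → G.Le y z → G.Le x z) ∧
  (∀ x ∈ G.labels, G.Le x x) ∧
  (∀ x y z, G.Rel x y → G.Rel y z → G.Rel x z) ∧
  (∀ x ∈ G.labels, G.Rel x x)

/-- `G` is happy iff it is structurally saturated and all its labels are happy. -/
def Happy (G : LSeq) : Prop := G.StructSat ∧ ∀ x ∈ G.labels, G.HappyLabel x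

/-- `G` is axiomatic iff some label carries `x:a•` and `x:a∘`, or carries `x:⊥•`. -/
def Axiomatic (G : LSeq) : Prop :=
  ∃ x, (∃ a, G.Black x (Formula.atom a) ∧ G.White x (Formula.atom a)) ∨
       G.Black x Formula.bot

/-- The reflexive-transitive closure of `R_G ∪ R_G⁻¹`:
its equivalence classes are the layers of `G`. -/
def LayerRel (G : LSeq) : ℕ → ℕ → Prop :=
  Relation.ReflTransGen (fun x y => G.Rel x y ∨ G.Rel y x)

/-- The layer of a label. -/
def layerOf (G : LSeq) (x : ℕ) : Set ℕ := {y | G.LayerRel x y}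

/-- `L` is a layer of `G`: an equivalence class of `LayerRel`. -/
def IsLayer (G : LSeq) (L : Set ℕ) : Prop := ∃ x ∈ G.labels, L = G.layerOf x

/-- `G` is layered (Def. 6.2). -/
def Layered (G : LSeq) : Prop :=
  (∀ x y, G.Rel x y → x ≠ y → ¬ G.Le x y ∧ ¬ G.Le y x) ∧
  (∀ x x' y y', G.Rel x y → G.Rel x' y' → G.Le x x' → x ≠ x' → ¬ G.Le y' y)

/-- The order on layers: `L1 ≤ L2` iff `x ≤_G y` for some `x ∈ L1`, `y ∈ L2`. -/
def LayerLE (G : LSeq) (L1 L2 : Set ℕ) : Prop := ∃ x ∈ L1, ∃ y ∈ L2, G.Le x y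

/-- Strict order on layers. -/
def LayerLT (G : LSeq) (L1 L2 : Set ℕ) : Prop := G.LayerLE L1 L2 ∧ L1 ≠ L2

/-- `G` is tree-layered: it is layered, there is a ≤-least layer, and any two
layers below a common layer are ≤-comparable. -/
def TreeLayered (G : LSeq) : Prop :=
  G.Layered ∧
  (∃ L0, G.IsLayer L0 ∧ ∀ L, G.IsLayer L → G.LayerLE L0 L) ∧
  (∀ L L' L'', G.IsLayer L → G.IsLayer L' → G.IsLayer L'' →
    G.LayerLE L' L → G.LayerLE L'' L → G.LayerLE L' L'' ∨ G.LayerLE L'' L')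

/-- `L` is a topmost (≤-maximal) layer of `G`. -/
def Topmost (G : LSeq) (L : Set ℕ) : Prop :=
  G.IsLayer L ∧ ∀ L', G.IsLayer L' → G.LayerLE L L' → L' = L

/-- The cluster of a label: its equivalence class under `R_G ∩ R_G⁻¹`. -/
def clusterOf (G : LSeq) (x : ℕ) : Set ℕ := {y | G.Rel x y ∧ G.Rel y x}

/-- `C` is a cluster of `G`. -/
def IsCluster (G : LSeq) (C : Set ℕ) : Prop := ∃ x ∈ G.labels, C = G.clusterOf x

/-- The relation `R_G` on clusters: `C1 R_G C2` iff `x R_G y`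
for some `x ∈ C1`, `y ∈ C2`. -/
def ClRel (G : LSeq) (C1 C2 : Set ℕ) : Prop := ∃ x ∈ C1, ∃ y ∈ C2, G.Rel x y

/-- The relation `≤_G` on clusters: `C1 ≤_G C2` iff every `y ∈ C2` has some
`x ∈ C1` with `x ≤_G y`. -/
def ClLe (G : LSeq) (C1 C2 : Set ℕ) : Prop := ∀ y ∈ C2, ∃ x ∈ C1, G.Le x y

/-- `G` is tree-clustered: it is structurally saturated, some cluster is
`R_G`-below every cluster, and any two clusters below a common cluster are
`R_G`-comparable. -/
def TreeClustered (G : LSeq) : Prop :=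
  G.StructSat ∧
  (∀ C' C'', G.IsCluster C' → G.IsCluster C'' →
    ∃ C, G.IsCluster C ∧ G.ClRel C C' ∧ G.ClRel C C'') ∧
  (∀ C C' C'', G.IsCluster C → G.IsCluster C' → G.IsCluster C'' →
    G.ClRel C' C → G.ClRel C'' C → G.ClRel C' C'' ∨ G.ClRel C'' C')

/-- `G` is stable: tree-layered, tree-clustered, and all inner (non-topmost)
layers are happy. -/
def Stable (G : LSeq) : Prop :=
  G.TreeLayered ∧ G.TreeClustered ∧
  ∀ L, G.IsLayer L → ¬ G.Topmost L → ∀ x ∈ L, G.HappyLabel x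

/-- `G` is semi-saturated: stable with all topmost layers naively happy. -/
def SemiSaturated (G : LSeq) : Prop :=
  G.Stable ∧ ∀ L, G.Topmost L → ∀ x ∈ L, G.NaivelyHappyLabel x

/-- `G` is saturated: stable with all topmost layers almost happy. -/
def Saturated (G : LSeq) : Prop :=
  G.Stable ∧ ∀ L, G.Topmost L → ∀ x ∈ L, G.AlmostHappyLabel x

/-- Labels `x` (in `G`) and `y` (in `H`) are equivalent (`x ∼ y`) iff they carry
exactly the same left formulas and the same right formulas. -/
def LabEquiv (G : LSeq) (x : ℕ) (H : LSeq) (y : ℕ) : Prop :=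
  (∀ A, G.Black x A ↔ H.Black y A) ∧ (∀ A, G.White x A ↔ H.White y A)

/-- A label has no past iff `y ≤_G x` implies `y = x`. -/
def NoPast (G : LSeq) (x : ℕ) : Prop := ∀ y, G.Le y x → y = x

end LSeq

/-- A stable set of sequents: finite with all elements stable. -/
def StableSet (S : Set LSeq) : Prop := S.Finite ∧ ∀ G ∈ S, G.Stable
/-- A semi-saturated set of sequents: finite with all elements semi-saturated. -/
def SemiSaturatedSet (S : Set LSeq) : Prop := S.Finite ∧ ∀ G ∈ S, G.SemiSaturated
/-- A saturated set of sequents: finite with all elements saturated. -/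
def SaturatedSet (S : Set LSeq) : Prop := S.Finite ∧ ∀ G ∈ S, G.Saturated
namespace LSeq

/-- `S` is a layer simulation between layers `L'` and `L` of `G` (Def. 7.12). -/
def LayerSim (G : LSeq) (L' L : Set ℕ) (S : ℕ → ℕ → Prop) : Prop :=
  (∃ a b, S a b) ∧
  (∀ x' x, S x' x → x' ∈ L' ∧ x ∈ L ∧ LabEquiv G x' G x) ∧
  (∀ x' x y, S x' x → G.Rel x y → ∃ y' ∈ L', G.Rel x' y' ∧ S y' y) ∧
  (∀ x' x y, S x' x → G.Rel y x → ∃ y' ∈ L', G.Rel y' x' ∧ S y' y)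

/-- A topmost layer `L` is simulated iff some layer `L' < L` simulates it. -/
def Simulated (G : LSeq) (L : Set ℕ) : Prop :=
  ∃ L', G.IsLayer L' ∧ G.LayerLT L' L ∧ ∃ S, G.LayerSim L' L S

end LSeq

/-- **Prop. 7.12'.** Let `L'` and `L` be layers in a layered
sequent `G` and let `S` be a layer simulation between `L'` and `L`. Then, for
every label `x ∈ L`, there exists a label `x' ∈ L'` such that `x' S x`. -/
theorem layer_simulation_total (G : LSeq) (L' L : Set ℕ) (S : ℕ → ℕ → Prop)
    (hG : G.Layered) (hL' : G.IsLayer L') (hL : G.IsLayer L)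
    (hsim : G.LayerSim L' L S) :
    ∀ x ∈ L, ∃ x' ∈ L', S x' x := by
  intro x hx
  obtain ⟨a, b, hab⟩ := hsim.1
  have hbL : b ∈ L := (hsim.2.1 _ _ hab).2.1
  obtain ⟨x0, _, rfl⟩ := hL
  have hsymm : Symmetric (fun x y => G.Rel x y ∨ G.Rel y x) := fun _ _ h => h.symm
  have hbx : G.LayerRel b x :=
    Relation.ReflTransGen.trans
      (Std.Symm.symm (self := @Relation.ReflTransGen.stdSymm _ _ ⟨fun _ _ h => hsymm h⟩) _ _ hbL) hx
  clear hx hbL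
  induction hbx with
  | refl => exact ⟨a, (hsim.2.1 _ _ hab).1, hab⟩
  | tail _ hstep ih =>
      obtain ⟨c', hc', hSc⟩ := ih
      rcases hstep with h | h
      · obtain ⟨y', hy', _, hS⟩ := hsim.2.2.1 _ _ _ hSc h
        exact ⟨y', hy', hS⟩
      · obtain ⟨y', hy', _, hS⟩ := hsim.2.2.2 _ _ _ hSc h
        exact ⟨y', hy', hS⟩
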